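/- For the one-dimensional rate-independent system with R(v) = |v|, I(t,z) = (1/2)z² + F(z) − ℓ(t)z, F(z) = 2z³ − (5/2)z² + 1 for z ≥ 0 and F(z) = −2z³ − (5/2)z² + 1 for z < 0, and ℓ(t) = −24(t − 1/4)² + 5/3, the constant function z₁(t) ≡ −1/3 is a differential solution on [0, 1/2] with initial value z₀ = −1/3; equivalently, |2/3 − ℓ(t)| ≤ 1 for all t ∈ [0, 1/2], which is exactly the inclusion 0 ∈ ∂|·|(0) + D_zI(t, −1/3) (note D_zI(t, −1/3) = −1/3 + F′(−1/3) − ℓ(t) = 2/3 − ℓ(t) since F′(z) = −6z² − 5z for z < 0). -/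

import Mathlib

noncomputable section

namespace RIS1D

/-- The non-quadratic part of the energy in the one-dimensional counterexample. -/
def F (z : ℝ) : ℝ :=
  if 0 ≤ z then 2 * z ^ 3 - 5 / 2 * z ^ 2 + 1 else -2 * z ^ 3 - 5 / 2 * z ^ 2 + 1

/-- The load `ℓ(t) = −24(t − 1/4)² + 5/3`. -/
def l (t : ℝ) : ℝ := -24 * (t - 1 / 4) ^ 2 + 5 / 3

/-- The energy `I(t,z) = ½z² + F(z) − ℓ(t)z`. -/
def I (t z : ℝ) : ℝ := 1 / 2 * z ^ 2 + F z - l t * z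

/-- for the one-dimensional rate-independent system with
`R(v) = |v|` and the above energy, the constant function `z₁(t) ≡ −1/3` is a
differential solution on `[0, 1/2]` with initial value `z₀ = −1/3`: it has
derivative `0`, and `0 ∈ ∂|·|(0) + D_zI(t,−1/3)` holds for every `t ∈ [0,1/2]`;
equivalently, `D_zI(t,−1/3) = 2/3 − ℓ(t)` and `|2/3 − ℓ(t)| ≤ 1` on `[0,1/2]`. -/
theorem statement18 :
    (fun _ : ℝ => (-1 / 3 : ℝ)) 0 = -1 / 3 ∧
    ∀ t ∈ Set.Icc (0 : ℝ) (1 / 2),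
      HasDerivAt (fun _ : ℝ => (-1 / 3 : ℝ)) 0 t ∧
      deriv (fun w : ℝ => I t w) (-1 / 3) = 2 / 3 - l t ∧
      |2 / 3 - l t| ≤ 1 ∧
      ∃ ξ : ℝ, (∀ v : ℝ, ξ * v ≤ |v|) ∧ ξ + deriv (fun w : ℝ => I t w) (-1 / 3) = 0 := by
  refine ⟨rfl, fun t ht => ?_⟩
  have hderivI : deriv (fun w : ℝ => I t w) (-1 / 3) = 2 / 3 - l t := by
    have hg : HasDerivAt (fun w : ℝ => 1 / 2 * w ^ 2 + (-2 * w ^ 3 - 5 / 2 * w ^ 2 + 1)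
        - l t * w) (2 / 3 - l t) (-1 / 3) := by
      have h1 : HasDerivAt (fun w : ℝ => w) 1 (-1 / 3 : ℝ) := hasDerivAt_id _
      have h := (((h1.pow 2).const_mul (1/2 : ℝ)).add
        ((((h1.pow 3).const_mul (-2 : ℝ)).sub ((h1.pow 2).const_mul (5/2 : ℝ))).add_const 1)).sub
        (h1.const_mul (l t))
      refine (h.congr_deriv (by norm_num)).congr_of_eventuallyEq (Filter.Eventually.of_forall fun w => ?_)
      simp [Pi.pow_apply]
    have hev : (fun w : ℝ => I t w) =ᶠ[nhds (-1/3 : ℝ)]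
        (fun w : ℝ => 1 / 2 * w ^ 2 + (-2 * w ^ 3 - 5 / 2 * w ^ 2 + 1) - l t * w) := by
      filter_upwards [Iio_mem_nhds (by norm_num : (-1/3 : ℝ) < 0)] with w hw
      simp only [I, F, if_neg (not_le.mpr (Set.mem_Iio.mp hw))]
    have : HasDerivAt (fun w : ℝ => I t w) (2 / 3 - l t) (-1 / 3) :=
      hg.congr_of_eventuallyEq hev
    exact this.deriv
  have habs : |2 / 3 - l t| ≤ 1 := by
    obtain ⟨h0, h1⟩ := ht
    have hsq : (t - 1/4) ^ 2 ≤ 1/16 := by nlinarith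
    have hsq0 : 0 ≤ (t - 1/4) ^ 2 := sq_nonneg _
    rw [abs_le]
    constructor <;> (simp only [l]; nlinarith)
  refine ⟨hasDerivAt_const _ _, hderivI, habs, l t - 2/3, fun v => ?_, by rw [hderivI]; ring⟩
  calc (l t - 2/3) * v ≤ |(l t - 2/3) * v| := le_abs_self _
    _ = |l t - 2/3| * |v| := abs_mul _ _
    _ ≤ 1 * |v| := by
        apply mul_le_mul_of_nonneg_right _ (abs_nonneg v)
        rw [abs_sub_comm] at habs; linarith [abs_le.mp habs |>.1, abs_le.mp habs |>.2,
          (abs_le.mp habs).1]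
    _ = |v| := one_mul _

end RIS1D
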